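/- Let M1, M2 ∈ R^{d1×d2} be rank-r matrices with compact SVDs M1 = U1Σ1V1ᵀ, M2 = U2'Σ2'V2'ᵀ. Define σ_min = min{σ_min(M1), σ_min(M2)} (smallest nonzero singular values) and σ_max = max{σ_max(M1), σ_max(M2)}. If ‖M1 − M2‖_op ≤ σ_min/2, then the Moore–Penrose pseudoinverses satisfy ‖M1† − M2†‖_op ≤ (4√2 + 1)·(σ_max/σ_min³)·‖M1 − M2‖_op. -/

import Mathlib

/-!
Wedin's identity: if `P` and `Q` are Moore–Penrose inverses of `A` and `B` and `E = A - B`, then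
`P - Q = -P E Q + P Pᴴ Eᴴ (1 - B Q) + (1 - P A) Eᴴ Qᴴ Q`, as follows from the four Penrose
conditions alone. Since `1 - B Q` and `1 - P A` are orthogonal projections, this gives
`‖P - Q‖ ≤ (‖P‖ ‖Q‖ + ‖P‖² + ‖Q‖²) ‖E‖`. The pseudoinverse of a compact SVD with singular values
at least `σmin` has norm at most `1 / σmin`, so `‖M₁† - M₂†‖ ≤ 3 ‖E‖ / σmin²`, and
`3 σmin ≤ (4√2 + 1) σmax`.
-/

open Matrix BigOperators

noncomputable def opNorm {m n : ℕ} (A : Matrix (Fin m) (Fin n) ℝ) : ℝ :=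
  ‖LinearMap.toContinuousLinearMap (Matrix.toEuclideanLin A)‖

namespace Matrix

variable {m n r R : Type*}

structure IsMoorePenroseInverse [Mul R] [AddCommMonoid R] [Star R] [Fintype m] [Fintype n]
    (A : Matrix m n R) (P : Matrix n m R) : Prop where
  mul_inv_mul : A * P * A = A
  inv_mul_inv : P * A * P = P
  isHermitian_mul_inv : (A * P).IsHermitian
  isHermitian_inv_mul : (P * A).IsHermitian

namespace IsMoorePenroseInverse

variable [Ring R] [StarRing R] [Fintype m] [Fintype n] {A B : Matrix m n R} {P Q : Matrix n m R}

theorem conjTranspose_mul_one_sub_mul_inv [DecidableEq m] (h : IsMoorePenroseInverse A P) :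
    Aᴴ * (1 - A * P) = 0 := by
  rw [← (isHermitian_one.sub h.isHermitian_mul_inv).eq, ← conjTranspose_mul, Matrix.sub_mul,
    Matrix.one_mul, h.mul_inv_mul, sub_self, conjTranspose_zero]

theorem one_sub_inv_mul_mul_conjTranspose [DecidableEq n] (h : IsMoorePenroseInverse A P) :
    (1 - P * A) * Aᴴ = 0 := by
  rw [← (isHermitian_one.sub h.isHermitian_inv_mul).eq, ← conjTranspose_mul, Matrix.mul_sub,
    Matrix.mul_one, ← Matrix.mul_assoc, h.mul_inv_mul, sub_self, conjTranspose_zero]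

theorem inv_mul_conjTranspose_mul_conjTranspose (h : IsMoorePenroseInverse A P) :
    P * Pᴴ * Aᴴ = P := by
  rw [Matrix.mul_assoc, ← conjTranspose_mul, h.isHermitian_mul_inv.eq, ← Matrix.mul_assoc,
    h.inv_mul_inv]

theorem conjTranspose_mul_conjTranspose_mul_inv (h : IsMoorePenroseInverse A P) :
    Aᴴ * Pᴴ * P = P := by
  rw [← conjTranspose_mul, h.isHermitian_inv_mul.eq, h.inv_mul_inv]

theorem sub_eq [DecidableEq m] [DecidableEq n] (hP : IsMoorePenroseInverse A P)
    (hQ : IsMoorePenroseInverse B Q) :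
    P - Q = -(P * (A - B) * Q) + P * Pᴴ * (A - B)ᴴ * (1 - B * Q)
      + (1 - P * A) * (A - B)ᴴ * Qᴴ * Q := by
  have h₁ : P * Pᴴ * Aᴴ * (1 - B * Q) = P - P * B * Q := by
    rw [hP.inv_mul_conjTranspose_mul_conjTranspose, Matrix.mul_sub, Matrix.mul_one,
      Matrix.mul_assoc]
  have h₂ : P * Pᴴ * Bᴴ * (1 - B * Q) = 0 := by
    rw [Matrix.mul_assoc, hQ.conjTranspose_mul_one_sub_mul_inv, Matrix.mul_zero]
  have h₃ : (1 - P * A) * Aᴴ * Qᴴ * Q = 0 := by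
    rw [hP.one_sub_inv_mul_mul_conjTranspose, Matrix.zero_mul, Matrix.zero_mul]
  have h₄ : (1 - P * A) * Bᴴ * Qᴴ * Q = Q - P * A * Q := by
    rw [Matrix.mul_assoc, Matrix.mul_assoc, ← Matrix.mul_assoc Bᴴ,
      hQ.conjTranspose_mul_conjTranspose_mul_inv, Matrix.sub_mul, Matrix.one_mul, Matrix.mul_assoc]
  rw [conjTranspose_sub, Matrix.mul_sub (P * Pᴴ), Matrix.sub_mul _ _ (1 - B * Q),
    Matrix.mul_sub (1 - P * A), Matrix.sub_mul _ _ Qᴴ, Matrix.sub_mul _ _ Q, h₁, h₂, h₃, h₄,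
    Matrix.mul_sub P, Matrix.sub_mul _ _ Q]
  abel

theorem isStarProjection_mul_inv (h : IsMoorePenroseInverse A P) : IsStarProjection (A * P) where
  isIdempotentElem := by
    rw [IsIdempotentElem, ← Matrix.mul_assoc, h.mul_inv_mul]
  isSelfAdjoint := h.isHermitian_mul_inv

theorem isStarProjection_inv_mul (h : IsMoorePenroseInverse A P) : IsStarProjection (P * A) where
  isIdempotentElem := by
    rw [IsIdempotentElem, ← Matrix.mul_assoc, h.inv_mul_inv]
  isSelfAdjoint := h.isHermitian_inv_mul

end IsMoorePenroseInverse

theorem isMoorePenroseInverse_mul_diagonal_mul_conjTranspose {K : Type*} [Field K] [StarRing K]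
    [Fintype m] [Fintype n] [Fintype r] [DecidableEq r] {U : Matrix m r K} {V : Matrix n r K}
    {σ : r → K} (hU : Uᴴ * U = 1) (hV : Vᴴ * V = 1) (hσ : ∀ k, σ k ≠ 0) :
    IsMoorePenroseInverse (U * diagonal σ * Vᴴ) (V * diagonal (fun k => (σ k)⁻¹) * Uᴴ) := by
  have hσσ : diagonal σ * diagonal (fun k => (σ k)⁻¹) = 1 := by
    rw [diagonal_mul_diagonal, ← diagonal_one]
    exact congrArg diagonal (funext fun k => mul_inv_cancel₀ (hσ k))
  have hσσ' : diagonal (fun k => (σ k)⁻¹) * diagonal σ = 1 := by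
    rw [diagonal_mul_diagonal, ← diagonal_one]
    exact congrArg diagonal (funext fun k => inv_mul_cancel₀ (hσ k))
  have hAP : U * diagonal σ * Vᴴ * (V * diagonal (fun k => (σ k)⁻¹) * Uᴴ) = U * Uᴴ := by
    simp only [Matrix.mul_assoc]
    rw [← Matrix.mul_assoc Vᴴ, hV, Matrix.one_mul, ← Matrix.mul_assoc (diagonal σ), hσσ,
      Matrix.one_mul]
  have hPA : V * diagonal (fun k => (σ k)⁻¹) * Uᴴ * (U * diagonal σ * Vᴴ) = V * Vᴴ := by
    simp only [Matrix.mul_assoc]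
    rw [← Matrix.mul_assoc Uᴴ, hU, Matrix.one_mul, ← Matrix.mul_assoc (diagonal _), hσσ',
      Matrix.one_mul]
  refine ⟨?_, ?_, ?_, ?_⟩
  · rw [hAP]
    simp only [Matrix.mul_assoc]
    rw [← Matrix.mul_assoc Uᴴ, hU, Matrix.one_mul]
  · rw [hPA]
    simp only [Matrix.mul_assoc]
    rw [← Matrix.mul_assoc Vᴴ, hV, Matrix.one_mul]
  · rw [hAP]; exact isHermitian_mul_conjTranspose_self U
  · rw [hPA]; exact isHermitian_mul_conjTranspose_self V

section L2OpNorm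

open scoped Matrix.Norms.L2Operator

variable {l 𝕜 : Type*} [RCLike 𝕜] [Fintype l] [Fintype m] [Fintype n] [Fintype r]

theorem l2_opNorm_mul_mul_le [DecidableEq n] [DecidableEq r] [DecidableEq l]
    (A : Matrix m n 𝕜) (B : Matrix n r 𝕜) (C : Matrix r l 𝕜) : ‖A * B * C‖ ≤ ‖A‖ * ‖B‖ * ‖C‖ :=
  (l2_opNorm_mul _ _).trans <| by gcongr; exact l2_opNorm_mul _ _

theorem l2_opNorm_le_one_of_conjTranspose_mul_self_eq_one [DecidableEq n] {V : Matrix m n 𝕜}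
    (hV : Vᴴ * V = 1) : ‖V‖ ≤ 1 := by
  have h := l2_opNorm_conjTranspose_mul_self V
  rw [hV] at h
  nlinarith [IsStarProjection.norm_le (1 : Matrix n n 𝕜) (.one _), norm_nonneg V]

theorem l2_opNorm_mul_mul_conjTranspose_le [DecidableEq m] [DecidableEq r] {U : Matrix m r 𝕜}
    {V : Matrix n r 𝕜} (hU : Uᴴ * U = 1) (hV : Vᴴ * V = 1) (D : Matrix r r 𝕜) :
    ‖V * D * Uᴴ‖ ≤ ‖D‖ :=
  calc ‖V * D * Uᴴ‖ ≤ ‖V‖ * ‖D‖ * ‖Uᴴ‖ := l2_opNorm_mul_mul_le _ _ _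
    _ ≤ 1 * ‖D‖ * 1 := by
      gcongr
      · exact l2_opNorm_le_one_of_conjTranspose_mul_self_eq_one hV
      · rw [l2_opNorm_conjTranspose]; exact l2_opNorm_le_one_of_conjTranspose_mul_self_eq_one hU
    _ = ‖D‖ := by ring

namespace IsMoorePenroseInverse

variable [DecidableEq m] [DecidableEq n] {A B : Matrix m n 𝕜} {P Q : Matrix n m 𝕜}

theorem norm_sub_le (hP : IsMoorePenroseInverse A P) (hQ : IsMoorePenroseInverse B Q) :
    ‖P - Q‖ ≤ (‖P‖ * ‖Q‖ + ‖P‖ ^ 2 + ‖Q‖ ^ 2) * ‖A - B‖ := by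
  have hBQ : ‖1 - B * Q‖ ≤ 1 := hQ.isStarProjection_mul_inv.one_sub.norm_le
  have hPA : ‖1 - P * A‖ ≤ 1 := hP.isStarProjection_inv_mul.one_sub.norm_le
  set E := A - B
  have h₁ : ‖P * E * Q‖ ≤ ‖P‖ * ‖Q‖ * ‖E‖ := by
    grw [l2_opNorm_mul_mul_le]
    exact le_of_eq (by ring)
  have h₂ : ‖P * Pᴴ * Eᴴ * (1 - B * Q)‖ ≤ ‖P‖ ^ 2 * ‖E‖ := by
    grw [l2_opNorm_mul, l2_opNorm_mul_mul_le, hBQ]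
    rw [l2_opNorm_conjTranspose, l2_opNorm_conjTranspose]
    exact le_of_eq (by ring)
  have h₃ : ‖(1 - P * A) * Eᴴ * Qᴴ * Q‖ ≤ ‖Q‖ ^ 2 * ‖E‖ := by
    grw [l2_opNorm_mul, l2_opNorm_mul_mul_le, hPA]
    rw [l2_opNorm_conjTranspose, l2_opNorm_conjTranspose]
    exact le_of_eq (by ring)
  rw [hP.sub_eq hQ]
  grw [norm_add₃_le, norm_neg, h₁, h₂, h₃]
  exact le_of_eq (by ring)

end IsMoorePenroseInverse

theorem l2_opNorm_diagonal_inv_le [DecidableEq r] {σ : r → ℝ} {s : ℝ} (hs : 0 < s)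
    (hσ : ∀ k, s ≤ σ k) : ‖(diagonal fun k => (σ k)⁻¹ : Matrix r r ℝ)‖ ≤ s⁻¹ := by
  rw [l2_opNorm_diagonal, pi_norm_le_iff_of_nonneg (inv_nonneg.2 hs.le)]
  intro k
  rw [Real.norm_of_nonneg (inv_nonneg.2 (hs.trans_le (hσ k)).le)]
  exact inv_anti₀ hs (hσ k)

end L2OpNorm

end Matrix

theorem Finite.lt_ciInf {ι α : Type*} [Finite ι] [Nonempty ι] [ConditionallyCompleteLinearOrder α]
    {f : ι → α} {a : α} (h : ∀ i, a < f i) : a < ⨅ i, f i := by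
  obtain ⟨i, hi⟩ := exists_eq_ciInf_of_finite (f := f)
  exact hi ▸ h i

open scoped Matrix.Norms.L2Operator in
theorem opNorm_eq_l2_opNorm {m n : ℕ} (A : Matrix (Fin m) (Fin n) ℝ) : opNorm A = ‖A‖ := rfl

open scoped Matrix.Norms.L2Operator in
theorem pinv_perturbation_general {d1 d2 r : ℕ} (hr : 1 ≤ r)
    (U1 U2 : Matrix (Fin d1) (Fin r) ℝ) (V1 V2 : Matrix (Fin d2) (Fin r) ℝ)
    (σ1 σ2 : Fin r → ℝ) (hσ1 : ∀ k, 0 < σ1 k) (hσ2 : ∀ k, 0 < σ2 k)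
    (hU1 : U1ᵀ * U1 = 1) (hU2 : U2ᵀ * U2 = 1)
    (hV1 : V1ᵀ * V1 = 1) (hV2 : V2ᵀ * V2 = 1)
    (M1 M2 : Matrix (Fin d1) (Fin d2) ℝ)
    (hM1 : M1 = U1 * Matrix.diagonal σ1 * V1ᵀ)
    (hM2 : M2 = U2 * Matrix.diagonal σ2 * V2ᵀ)
    (σmin σmax : ℝ)
    (hσmin : σmin = min (⨅ k : Fin r, σ1 k) (⨅ k : Fin r, σ2 k))
    (hσmax : σmax = max (⨆ k : Fin r, σ1 k) (⨆ k : Fin r, σ2 k)) :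
    opNorm (V1 * Matrix.diagonal (fun k => (σ1 k)⁻¹) * U1ᵀ -
        V2 * Matrix.diagonal (fun k => (σ2 k)⁻¹) * U2ᵀ)
      ≤ (4 * Real.sqrt 2 + 1) * (σmax / σmin ^ 3) * opNorm (M1 - M2) := by
  have : Nonempty (Fin r) := ⟨⟨0, hr⟩⟩
  have hmin_pos : 0 < σmin := hσmin ▸ lt_min (Finite.lt_ciInf hσ1) (Finite.lt_ciInf hσ2)
  have hmin₁ : ∀ k, σmin ≤ σ1 k := fun k =>
    hσmin ▸ (min_le_left _ _).trans (ciInf_le (Finite.bddBelow_range σ1) k)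
  have hmin₂ : ∀ k, σmin ≤ σ2 k := fun k =>
    hσmin ▸ (min_le_right _ _).trans (ciInf_le (Finite.bddBelow_range σ2) k)
  have hmin_le_max : σmin ≤ σmax := hσmin ▸ hσmax ▸ (min_le_left _ _).trans
    ((ciInf_le_ciSup (Finite.bddBelow_range σ1) (Finite.bddAbove_range σ1)).trans
      (le_max_left _ _))
  simp only [← conjTranspose_eq_transpose_of_trivial] at hU1 hU2 hV1 hV2 hM1 hM2 ⊢
  have hP1 := hM1 ▸ isMoorePenroseInverse_mul_diagonal_mul_conjTranspose hU1 hV1 (hσ1 · |>.ne')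
  have hP2 := hM2 ▸ isMoorePenroseInverse_mul_diagonal_mul_conjTranspose hU2 hV2 (hσ2 · |>.ne')
  rw [opNorm_eq_l2_opNorm, opNorm_eq_l2_opNorm]
  grw [hP1.norm_sub_le hP2,
    l2_opNorm_mul_mul_conjTranspose_le hU1 hV1, l2_opNorm_diagonal_inv_le hmin_pos hmin₁,
    l2_opNorm_mul_mul_conjTranspose_le hU2 hV2, l2_opNorm_diagonal_inv_le hmin_pos hmin₂]
  gcongr ?_ * _
  calc σmin⁻¹ * σmin⁻¹ + σmin⁻¹ ^ 2 + σmin⁻¹ ^ 2 = 3 * σmin / σmin ^ 3 := by field_simp; ring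
    _ ≤ (4 * √2 + 1) * σmax / σmin ^ 3 := by
      gcongr
      nlinarith [Real.one_le_sqrt.2 one_le_two]
    _ = (4 * √2 + 1) * (σmax / σmin ^ 3) := by ring

/-- Pseudoinverse perturbation bound.  Let `M₁ = U₁ Σ₁ V₁ᵀ`,
`M₂ = U₂ Σ₂ V₂ᵀ` be compact SVDs of rank-`r` matrices (with positive singular
values `σ₁, σ₂`).  Set `σmin = min` of the smallest and `σmax = max` of the largest
singular values.  If `‖M₁ − M₂‖_op ≤ σmin/2`, the Moore–Penrose pseudoinverses
`Mᵢ† = Vᵢ Σᵢ⁻¹ Uᵢᵀ` satisfy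
`‖M₁† − M₂†‖_op ≤ (4√2+1)·(σmax/σmin³)·‖M₁ − M₂‖_op`. -/
theorem pinv_perturbation {d1 d2 r : ℕ} (hr : 1 ≤ r)
    (U1 U2 : Matrix (Fin d1) (Fin r) ℝ) (V1 V2 : Matrix (Fin d2) (Fin r) ℝ)
    (σ1 σ2 : Fin r → ℝ) (hσ1 : ∀ k, 0 < σ1 k) (hσ2 : ∀ k, 0 < σ2 k)
    (hU1 : U1ᵀ * U1 = 1) (hU2 : U2ᵀ * U2 = 1)
    (hV1 : V1ᵀ * V1 = 1) (hV2 : V2ᵀ * V2 = 1)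
    (M1 M2 : Matrix (Fin d1) (Fin d2) ℝ)
    (hM1 : M1 = U1 * Matrix.diagonal σ1 * V1ᵀ)
    (hM2 : M2 = U2 * Matrix.diagonal σ2 * V2ᵀ)
    (σmin σmax : ℝ)
    (hσmin : σmin = min (⨅ k : Fin r, σ1 k) (⨅ k : Fin r, σ2 k))
    (hσmax : σmax = max (⨆ k : Fin r, σ1 k) (⨆ k : Fin r, σ2 k))
    (hclose : opNorm (M1 - M2) ≤ σmin / 2) :
    opNorm (V1 * Matrix.diagonal (fun k => (σ1 k)⁻¹) * U1ᵀ -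
        V2 * Matrix.diagonal (fun k => (σ2 k)⁻¹) * U2ᵀ)
      ≤ (4 * Real.sqrt 2 + 1) * (σmax / σmin ^ 3) * opNorm (M1 - M2) :=
  pinv_perturbation_general hr U1 U2 V1 V2 σ1 σ2 hσ1 hσ2 hU1 hU2 hV1 hV2 M1 M2 hM1 hM2 σmin σmax
    hσmin hσmax
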